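/- Inconsistency of the parallel timing system S₃: for the path ρ = ⟨q₁, q₂, q₃, q₁⟩, the maximum delay Δ_{P₃′}(ρ) of the flattened automaton equals 25, while Δ_{P₃}(ρ) = 24; hence Δ_{P₃′}(ρ) > Δ_{P₃}(ρ), so the consistency condition Δ_{P₃′}(ρ) ≤ Δ_{P₃}(ρ) fails for ρ. -/

import Mathlib

/-!
Along ⟨q₁, q₂, q₃, q₁⟩ a subword consists of an `a`, a `b` and a `c` step, and the only guard is
the one on the `c` step. In P₃ the timer `T` is reset by the `a` step, so `T < 24` says exactly
that the duration is below 24. In P₃′ the guard `x_A < 25` bounds the duration by 25 in the same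
way, while `x_B < 11` only asks the `b` step to lie within 11 of the `c` step, which can always be
arranged. Hence the durations fill `(0, 24)` and `(0, 25)` respectively, with suprema 24 and 25.
-/

/-- A transition of a timed automaton: source state, alphabet symbol, destination state,
the list of timers reset (to 0) when the transition is taken, and the conjunction of
constraints `x < c` (represented as pairs `(x, c)`) that must hold for the transition
to be taken. -/
structure TTrans (A Q K : Type) where
  src : Q
  sym : A
  dst : Q
  resets : List K
  constraints : List (K × ℝ)

/-- One step of a timed automaton with transition list `trs`, from state `q` to state `q'`,
reading symbol `a` at time `t`.  A timer valuation `v` records, for each timer, the timestamp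
at which it was last reset (so the current value of timer `k` at time `t` is `t - v k`).
Every constraint `x < c` on the chosen transition must be satisfied, and the transition's
reset timers get reset time `t` in the new valuation `v'`. -/
def TStep {A Q K : Type} (trs : List (TTrans A Q K)) (q : Q) (v : K → ℝ)
    (a : A) (t : ℝ) (q' : Q) (v' : K → ℝ) : Prop :=
  ∃ tr ∈ trs, tr.src = q ∧ tr.sym = a ∧ tr.dst = q' ∧
    (∀ c ∈ tr.constraints, t - v c.1 < c.2) ∧
    (∀ k, (k ∈ tr.resets → v' k = t) ∧ (k ∉ tr.resets → v' k = v k))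

/-- `TRun trs q v w qs`: starting in state `q` with timer valuation `v`, the automaton can
read the finite timed word `w`, visiting exactly the sequence of states `qs`
(`qs` starts with `q` and has length `w.length + 1`). -/
inductive TRun {A Q K : Type} (trs : List (TTrans A Q K)) :
    Q → (K → ℝ) → List (A × ℝ) → List Q → Prop
  | nil (q : Q) (v : K → ℝ) : TRun trs q v [] [q]
  | cons {q : Q} {v : K → ℝ} {a : A} {t : ℝ} {q' : Q} {v' : K → ℝ}
      {w : List (A × ℝ)} {qs : List Q} :
      TStep trs q v a t q' v' → TRun trs q' v' w qs →
      TRun trs q v ((a, t) :: w) (q :: qs)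

/-- The timestamps of a timed word are strictly increasing. -/
def Increasing {A : Type} (w : List (A × ℝ)) : Prop :=
  w.Chain' fun p q => p.2 < q.2

/-- Timestamp of the first symbol of a timed word (0 for the empty word). -/
def firstTime {A : Type} (w : List (A × ℝ)) : ℝ := (w.map Prod.snd).headD 0

/-- Timestamp of the last symbol of a timed word (0 for the empty word). -/
def lastTime {A : Type} (w : List (A × ℝ)) : ℝ := (w.map Prod.snd).getLastD 0

/-- The duration of a timed word: last timestamp minus first timestamp. -/
def duration {A : Type} (w : List (A × ℝ)) : ℝ := lastTime w - firstTime w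

/-- A timed finite automaton: a start state, an accepting state and a finite
list of transitions. -/
structure TFA (A Q K : Type) where
  start : Q
  accept : Q
  trans : List (TTrans A Q K)

/-- A TFA accepts a (nonempty, strictly increasing) finite timed word if some run from the
start state — with all timers initially 0 at the time of the first transition — reads the
whole word and ends in the accepting state. -/
def TFA.Accepts {A Q K : Type} (M : TFA A Q K) (w : List (A × ℝ)) : Prop :=
  w ≠ [] ∧ Increasing w ∧
  ∃ qs : List Q, TRun M.trans M.start (fun _ => firstTime w) w qs ∧
    qs.getLast? = some M.accept

/-- A timed Büchi automaton: a start state, a set of accepting states and a finite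
list of transitions. -/
structure TBA (A Q K : Type) where
  start : Q
  accept : Set Q
  trans : List (TTrans A Q K)

/-- A TBA accepts an infinite timed word `(σ, τ)` (with strictly increasing timestamps)
if some infinite run from the start state — all timers 0 at the time `τ 0` of the first
transition — visits an accepting state infinitely often. -/
def TBA.Accepts {A Q K : Type} (M : TBA A Q K) (σ : ℕ → A) (τ : ℕ → ℝ) : Prop :=
  StrictMono τ ∧
  ∃ (ρ : ℕ → Q) (v : ℕ → K → ℝ),
    ρ 0 = M.start ∧ v 0 = (fun _ => τ 0) ∧
    (∀ i, TStep M.trans (ρ i) (v i) (σ i) (τ i) (ρ (i + 1)) (v (i + 1))) ∧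
    (∀ n, ∃ m, n ≤ m ∧ ρ m ∈ M.accept)

/-- `u` is a subword over the finite path `p` of TBA `M` if the transitions of `u` are taken
consecutively, traversing exactly the states of `p`, within some (finite prefix of a) run of
`M` from its start state, all timer constraints along the run being satisfied. -/
def TBA.SubwordOver {A Q K : Type} (M : TBA A Q K) (p : List Q) (u : List (A × ℝ)) : Prop :=
  ∃ (w₀ : List (A × ℝ)) (qs₀ : List Q),
    qs₀.length = w₀.length ∧
    Increasing (w₀ ++ u) ∧
    TRun M.trans M.start (fun _ => firstTime (w₀ ++ u)) (w₀ ++ u) (qs₀ ++ p)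

/-- The maximum delay `Δ_M(p)` along a path `p`: the supremum of the durations of all
subwords over `p`. -/
noncomputable def TBA.maxDelay {A Q K : Type} (M : TBA A Q K) (p : List Q) : ℝ :=
  sSup {d : ℝ | ∃ u, M.SubwordOver p u ∧ duration u = d}
/-- The alphabet {a, b, c}. -/
inductive ABC : Type
  | a | b | c
deriving DecidableEq

/-- The TBA P₃: states q₁ = 0 (start), q₂ = 1, q₃ = 2 (accepting), one timer `T`, and
transitions q₁→q₂ on `a` resetting `T`, q₂→q₃ on `b` unconstrained, q₃→q₁ on `c` with
constraint `T < 24`. -/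
def P3 : TBA ABC ℕ Unit :=
  { start := 0, accept := {2},
    trans := [⟨0, ABC.a, 1, [()], []⟩,
              ⟨1, ABC.b, 2, [], []⟩,
              ⟨2, ABC.c, 0, [], [((), 24)]⟩] }

/-- The flattened TBA P₃′: same states and labels as P₃, timers x_A = 0 and x_B = 1;
q₁→q₂ on `a` resets x_A, q₂→q₃ on `b` resets x_B, and q₃→q₁ on `c` carries the
constraint `x_A < 25 ∧ x_B < 11`. -/
def P3' : TBA ABC ℕ (Fin 2) :=
  { start := 0, accept := {2},
    trans := [⟨0, ABC.a, 1, [0], []⟩,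
              ⟨1, ABC.b, 2, [1], []⟩,
              ⟨2, ABC.c, 0, [], [(0, 25), (1, 11)]⟩] }

section TimedRuns

variable {A Q K : Type} {trs : List (TTrans A Q K)}

theorem TRun.length_eq {q : Q} {v : K → ℝ} {w : List (A × ℝ)} {qs : List Q}
    (h : TRun trs q v w qs) : qs.length = w.length + 1 := by
  induction h with
  | nil => rfl
  | cons _ _ ih => simp [ih]

theorem TRun.of_append {w₀ u : List (A × ℝ)} {qs₀ p : List Q} {q : Q} {v : K → ℝ}
    (h : TRun trs q v (w₀ ++ u) (qs₀ ++ p)) (hlen : qs₀.length = w₀.length) :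
    ∃ q' v', TRun trs q' v' u p := by
  induction w₀ generalizing qs₀ q v with
  | nil =>
    obtain rfl := List.length_eq_zero_iff.mp hlen
    exact ⟨q, v, h⟩
  | cons _ w₀ ih =>
    obtain _ | ⟨r, qs₀⟩ := qs₀
    · simp at hlen
    · cases h with
      | cons _ hrun => exact ih hrun (Nat.succ_injective hlen)

theorem TStep.constraints_resets_of_unique_src {q q' : Q} {v v' : K → ℝ} {a : A} {t : ℝ}
    {tr : TTrans A Q K} (h : TStep trs q v a t q' v') (huniq : ∀ tr' ∈ trs, tr'.src = q → tr' = tr) :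
    (∀ c ∈ tr.constraints, t - v c.1 < c.2) ∧
      ∀ k, (k ∈ tr.resets → v' k = t) ∧ (k ∉ tr.resets → v' k = v k) := by
  obtain ⟨tr', htr', hsrc, -, -, hconstr, hreset⟩ := h
  obtain rfl := huniq tr' htr' hsrc
  exact ⟨hconstr, hreset⟩

theorem TStep.of_mem [DecidableEq K] {tr : TTrans A Q K} (htr : tr ∈ trs) {v : K → ℝ}
    {t : ℝ} (hconstr : ∀ c ∈ tr.constraints, t - v c.1 < c.2) :
    TStep trs tr.src v tr.sym t tr.dst (fun k => if k ∈ tr.resets then t else v k) :=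
  ⟨tr, htr, rfl, rfl, rfl, hconstr, fun _ => ⟨fun hk => if_pos hk, fun hk => if_neg hk⟩⟩

end TimedRuns

section Increasing

variable {A : Type}

@[simp]
theorem increasing_singleton (x : A × ℝ) : Increasing [x] :=
  List.isChain_singleton x

@[simp]
theorem increasing_cons_cons {x y : A × ℝ} {w : List (A × ℝ)} :
    Increasing (x :: y :: w) ↔ x.2 < y.2 ∧ Increasing (y :: w) :=
  List.isChain_cons_cons

theorem Increasing.firstTime_lt_lastTime {w : List (A × ℝ)} (hw : Increasing w)
    (hlen : 2 ≤ w.length) : firstTime w < lastTime w := by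
  obtain _ | ⟨x, _ | ⟨y, w⟩⟩ := w
  · simp at hlen
  · simp at hlen
  have hsorted : ((x :: y :: w).map Prod.snd).Pairwise (· < ·) :=
    List.isChain_iff_pairwise.mp ((List.isChain_map _).mpr hw)
  rw [List.map_cons, List.pairwise_cons] at hsorted
  simp only [firstTime, lastTime, List.headD_cons, List.getLastD_eq_getLast?, List.map_cons,
    List.getLast?_eq_some_getLast (List.cons_ne_nil _ _), Option.getD_some]
  exact hsorted.1 _ (List.getLast_mem _)

end Increasing

@[simp]
theorem duration_cons_cons_singleton {A : Type} (x y z : A × ℝ) :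
    duration [x, y, z] = z.2 - x.2 := by
  simp [duration, firstTime, lastTime]

namespace TBA

variable {A Q K : Type} {M : TBA A Q K} {p : List Q} {u : List (A × ℝ)}

theorem SubwordOver.exists_run (h : M.SubwordOver p u) :
    Increasing u ∧ ∃ q v, TRun M.trans q v u p := by
  obtain ⟨w₀, qs₀, hlen, hinc, hrun⟩ := h
  exact ⟨(List.isChain_append.mp hinc).2.1, hrun.of_append hlen⟩

theorem subwordOver_of_run (hinc : Increasing u)
    (hrun : TRun M.trans M.start (fun _ => firstTime u) u p) : M.SubwordOver p u :=
  ⟨[], [], rfl, hinc, hrun⟩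

theorem SubwordOver.duration_pos (h : M.SubwordOver p u) (hp : 3 ≤ p.length) :
    0 < duration u := by
  obtain ⟨hinc, q, v, hrun⟩ := h.exists_run
  have := hrun.length_eq
  exact sub_pos.mpr (hinc.firstTime_lt_lastTime (by omega))

end TBA

theorem P3_duration_lt {q : ℕ} {v : Unit → ℝ} {u : List (ABC × ℝ)}
    (h : TRun P3.trans q v u [0, 1, 2, 0]) : duration u < 24 := by
  rcases h with _ | ⟨h₁, _ | ⟨h₂, _ | ⟨h₃, _ | ⟨_, (_ | _)⟩⟩⟩⟩
  have hreset := ((h₁.constraints_resets_of_unique_src (tr := ⟨0, ABC.a, 1, [()], []⟩)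
    (by simp [P3])).2 ()).1 (by simp)
  have hkeep := ((h₂.constraints_resets_of_unique_src (tr := ⟨1, ABC.b, 2, [], []⟩)
    (by simp [P3])).2 ()).2 (by simp)
  have hguard := (h₃.constraints_resets_of_unique_src (tr := ⟨2, ABC.c, 0, [], [((), 24)]⟩)
    (by simp [P3])).1 ((), 24) (by simp)
  simp only [duration_cons_cons_singleton] at hguard ⊢
  linarith

theorem P3'_duration_lt {q : ℕ} {v : Fin 2 → ℝ} {u : List (ABC × ℝ)}
    (h : TRun P3'.trans q v u [0, 1, 2, 0]) : duration u < 25 := by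
  rcases h with _ | ⟨h₁, _ | ⟨h₂, _ | ⟨h₃, _ | ⟨_, (_ | _)⟩⟩⟩⟩
  have hreset := ((h₁.constraints_resets_of_unique_src (tr := ⟨0, ABC.a, 1, [0], []⟩)
    (by simp [P3'])).2 0).1 (by simp)
  have hkeep := ((h₂.constraints_resets_of_unique_src (tr := ⟨1, ABC.b, 2, [1], []⟩)
    (by simp [P3'])).2 0).2 (by simp)
  have hguard := (h₃.constraints_resets_of_unique_src
    (tr := ⟨2, ABC.c, 0, [], [(0, 25), (1, 11)]⟩) (by simp [P3'])).1 (0, 25) (by simp)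
  simp only [duration_cons_cons_singleton] at hguard ⊢
  linarith

theorem P3_subwordOver {t : ℝ} (ht₀ : 0 < t) (ht : t < 24) :
    P3.SubwordOver [0, 1, 2, 0] [(ABC.a, 0), (ABC.b, t / 2), (ABC.c, t)] := by
  refine TBA.subwordOver_of_run ?_ ?_
  · simp only [increasing_cons_cons, increasing_singleton, and_true]
    constructor <;> linarith
  refine .cons (TStep.of_mem (tr := ⟨0, ABC.a, 1, [()], []⟩) (by simp [P3]) (by simp)) ?_
  refine .cons (TStep.of_mem (tr := ⟨1, ABC.b, 2, [], []⟩) (by simp [P3]) (by simp)) ?_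
  exact .cons (TStep.of_mem (tr := ⟨2, ABC.c, 0, [], [((), 24)]⟩) (by simp [P3])
    (by simpa [firstTime] using ht)) (.nil _ _)

/-- The `b`-step is placed within 11 of the `c`-step, so that the guard `x_B < 11` holds. -/
theorem P3'_subwordOver {t : ℝ} (ht₀ : 0 < t) (ht : t < 25) :
    P3'.SubwordOver [0, 1, 2, 0] [(ABC.a, 0), (ABC.b, max (t / 2) (t - 10)), (ABC.c, t)] := by
  refine TBA.subwordOver_of_run ?_ ?_
  · simp only [increasing_cons_cons, increasing_singleton, and_true]
    exact ⟨lt_max_of_lt_left (by linarith), max_lt (by linarith) (by linarith)⟩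
  refine .cons (TStep.of_mem (tr := ⟨0, ABC.a, 1, [0], []⟩) (by simp [P3']) (by simp)) ?_
  refine .cons (TStep.of_mem (tr := ⟨1, ABC.b, 2, [1], []⟩) (by simp [P3']) (by simp)) ?_
  have hguardB : t - max (t / 2) (t - 10) < 11 := by linarith [le_max_right (t / 2) (t - 10)]
  exact .cons (TStep.of_mem (tr := ⟨2, ABC.c, 0, [], [(0, 25), (1, 11)]⟩) (by simp [P3'])
    (by simpa [firstTime] using And.intro ht hguardB)) (.nil _ _)

theorem P3_durations :
    {d : ℝ | ∃ u, P3.SubwordOver [0, 1, 2, 0] u ∧ duration u = d} = Set.Ioo 0 24 := by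
  ext d
  constructor
  · rintro ⟨u, hu, rfl⟩
    obtain ⟨-, q, v, hrun⟩ := hu.exists_run
    exact ⟨hu.duration_pos (by simp), P3_duration_lt hrun⟩
  · rintro ⟨hd₀, hd⟩
    exact ⟨_, P3_subwordOver hd₀ hd, by simp⟩

theorem P3'_durations :
    {d : ℝ | ∃ u, P3'.SubwordOver [0, 1, 2, 0] u ∧ duration u = d} = Set.Ioo 0 25 := by
  ext d
  constructor
  · rintro ⟨u, hu, rfl⟩
    obtain ⟨-, q, v, hrun⟩ := hu.exists_run
    exact ⟨hu.duration_pos (by simp), P3'_duration_lt hrun⟩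
  · rintro ⟨hd₀, hd⟩
    exact ⟨_, P3'_subwordOver hd₀ hd, by simp⟩

/-- Inconsistency of the parallel timing system S₃: for the path ρ = ⟨q₁,q₂,q₃,q₁⟩,
Δ_{P₃′}(ρ) = 25 while Δ_{P₃}(ρ) = 24, hence Δ_{P₃′}(ρ) > Δ_{P₃}(ρ) and the consistency
condition Δ_{P₃′}(ρ) ≤ Δ_{P₃}(ρ) fails. -/
theorem S3_inconsistent :
    P3'.maxDelay [0, 1, 2, 0] = 25 ∧ P3.maxDelay [0, 1, 2, 0] = 24 ∧
    P3.maxDelay [0, 1, 2, 0] < P3'.maxDelay [0, 1, 2, 0] ∧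
    ¬ P3'.maxDelay [0, 1, 2, 0] ≤ P3.maxDelay [0, 1, 2, 0] := by
  have hP3' : P3'.maxDelay [0, 1, 2, 0] = 25 := by
    rw [TBA.maxDelay, P3'_durations, csSup_Ioo (by norm_num)]
  have hP3 : P3.maxDelay [0, 1, 2, 0] = 24 := by
    rw [TBA.maxDelay, P3_durations, csSup_Ioo (by norm_num)]
  rw [hP3', hP3]
  norm_num
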